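/- Let (V,β,ρ,μ) be a representation of a Hom-pre-Lie algebra (A,·,α) with β invertible. Define ρ⋆, μ⋆ : A → gl(V*) by ⟨ρ⋆(x)(ξ), u⟩ = −⟨ξ, β^{-2}(ρ(α(x))(u))⟩ and ⟨μ⋆(x)(ξ), u⟩ = −⟨ξ, β^{-2}(μ(α(x))(u))⟩ for x ∈ A, ξ ∈ V*, u ∈ V. Then (V*, (β^{-1})*, ρ⋆ − μ⋆, −μ⋆) is a representation of (A,·,α), where (β^{-1})* denotes the transpose of β^{-1}. -/

import Mathlib

/-- A Hom-pre-Lie algebra structure on `A`: a bilinear product and an algebra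
morphism `α` satisfying the Hom-pre-Lie identity. -/
def IsHomPreLie {K A : Type*} [Field K] [AddCommGroup A] [Module K A]
    (mul : A →ₗ[K] A →ₗ[K] A) (α : A →ₗ[K] A) : Prop :=
  (∀ x y, α (mul x y) = mul (α x) (α y)) ∧
  (∀ x y z, mul (mul x y) (α z) - mul (α x) (mul y z)
      = mul (mul y x) (α z) - mul (α y) (mul x z))

/-- A representation of a Hom-Lie algebra `(L, bracket, α)` on `V` with respect to `β`. -/
def IsHomLieRep {K L V : Type*} [Field K] [AddCommGroup L] [Module K L]
    [AddCommGroup V] [Module K V]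
    (bracket : L →ₗ[K] L →ₗ[K] L) (α : L →ₗ[K] L)
    (β : V →ₗ[K] V) (ρ : L →ₗ[K] Module.End K V) : Prop :=
  (∀ x, ρ (α x) ∘ₗ β = β ∘ₗ ρ x) ∧
  (∀ x y, ρ (bracket x y) ∘ₗ β = ρ (α x) ∘ₗ ρ y - ρ (α y) ∘ₗ ρ x)

/-- A representation `(V, β, ρ, μ)` of a Hom-pre-Lie algebra `(A, mul, α)`:
`ρ` is a representation of the sub-adjacent Hom-Lie algebra (whose bracket is the
commutator `mul - mul.flip`) with respect to `β`, together with the two compatibility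
conditions for `μ`. -/
def IsHomPreLieRep {K A V : Type*} [Field K] [AddCommGroup A] [Module K A]
    [AddCommGroup V] [Module K V]
    (mul : A →ₗ[K] A →ₗ[K] A) (α : A →ₗ[K] A)
    (β : V →ₗ[K] V) (ρ μ : A →ₗ[K] Module.End K V) : Prop :=
  IsHomLieRep (mul - mul.flip) α β ρ ∧
  (∀ x, β ∘ₗ μ x = μ (α x) ∘ₗ β) ∧
  (∀ x y, μ (α y) ∘ₗ μ x - μ (mul x y) ∘ₗ β = μ (α y) ∘ₗ ρ x - ρ (α x) ∘ₗ μ y)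

/-- The twisted dual map `ρ⋆ : A → gl(V*)`, defined by
`⟨ρ⋆(x)(ξ), u⟩ = −⟨ξ, β⁻²(ρ(α(x))(u))⟩`. -/
noncomputable def starRep {K A V : Type*} [Field K] [AddCommGroup A] [Module K A]
    [AddCommGroup V] [Module K V]
    (α : A →ₗ[K] A) (β : V ≃ₗ[K] V) (ρ : A →ₗ[K] Module.End K V) :
    A →ₗ[K] Module.End K (V →ₗ[K] K) where
  toFun x := - (((β.symm.toLinearMap ∘ₗ β.symm.toLinearMap) ∘ₗ ρ (α x)).dualMap :
      Module.End K (Module.Dual K V))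
  map_add' x y := by
    ext ξ u
    simp [LinearMap.dualMap_apply]
    abel
  map_smul' c x := by
    ext ξ u
    simp [LinearMap.dualMap_apply]

instance starRepAddCommGroup {K A V : Type*} [Field K] [AddCommGroup A] [Module K A]
    [AddCommGroup V] [Module K V] : AddCommGroup (A →ₗ[K] Module.End K (V →ₗ[K] K)) :=
  @LinearMap.addCommGroup K K A (Module.End K (V →ₗ[K] K)) _ _ _ LinearMap.addCommGroup _ _
    (RingHom.id K)

/-! Transposition reverses composition, and the compatibility `φ (α x) ∘ β = β ∘ φ x` lets
every `β⁻¹` in a composite of twisted duals be moved to the far left. So each composite of the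
dual operators is the transpose of `β⁻⁴ ∘ T` for an operator `T` on `V`, and each axiom of the
dual representation becomes the transpose of an axiom of the original one, taken at `α² x`,
`α² y`: the Hom-Lie axiom of `ρ - μ` (itself a representation of the sub-adjacent Hom-Lie
algebra) for `ρ⋆ - μ⋆`, and the compatibility axiom of `μ` for `-μ⋆`. -/

lemma LinearEquiv.coe_symm_mul_coe {R M : Type*} [Semiring R] [AddCommMonoid M] [Module R M]
    (e : M ≃ₗ[R] M) : (e.symm : Module.End R M) * e = 1 :=
  e.symm_comp

section StarRep

variable {K A V : Type*} [Field K] [AddCommGroup A] [Module K A] [AddCommGroup V] [Module K V]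
  {α : A →ₗ[K] A} {β : V ≃ₗ[K] V}

lemma starRep_apply (φ : A →ₗ[K] Module.End K V) (x : A) (ξ : Module.Dual K V) (u : V) :
    starRep α β φ x ξ u = -ξ (β.symm (β.symm (φ (α x) u))) := rfl

lemma starRep_sub (φ ψ : A →ₗ[K] Module.End K V) :
    starRep α β (φ - ψ) = starRep α β φ - starRep α β ψ := by
  ext x ξ u
  -- the subtraction on the right comes from `starRepAddCommGroup`, which `LinearMap.sub_apply`
  -- does not match
  change _ = (starRep α β φ x - starRep α β ψ x) ξ u
  simp only [starRep_apply, LinearMap.sub_apply, map_sub]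
  abel

lemma starRep_neg (φ : A →ₗ[K] Module.End K V) : starRep α β (-φ) = -starRep α β φ := by
  ext x ξ u
  change _ = (-starRep α β φ x) ξ u
  simp only [starRep_apply, LinearMap.neg_apply, map_neg]

lemma starRep_eq_neg_dualMap (φ : A →ₗ[K] Module.End K V) (x : A) :
    starRep α β φ x = -((β.symm : Module.End K V) ^ 2 * φ (α x)).dualMap := by
  rw [sq]
  rfl

lemma mul_symm_eq_symm_mul {φ : A →ₗ[K] Module.End K V}
    (hφ : ∀ x, φ (α x) ∘ₗ β = β ∘ₗ φ x) (x : A) :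
    φ x * β.symm = β.symm * φ (α x) := by
  ext v
  simpa using congr(β.symm ($(hφ x) (β.symm v))).symm

lemma starRep_comp_starRep (φ : A →ₗ[K] Module.End K V) {ψ : A →ₗ[K] Module.End K V}
    (hψ : ∀ x, ψ (α x) ∘ₗ β = β ∘ₗ ψ x) (x y : A) :
    starRep α β φ x ∘ₗ starRep α β ψ y
      = ((β.symm : Module.End K V) ^ 4 * (ψ (α (α (α y))) * φ (α x))).dualMap := by
  have key : ψ (α y) * (β.symm : Module.End K V) ^ 2
      = (β.symm : Module.End K V) ^ 2 * ψ (α (α (α y))) := by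
    rw [sq, ← mul_assoc, mul_symm_eq_symm_mul hψ, mul_assoc, mul_symm_eq_symm_mul hψ, mul_assoc]
  simp only [starRep_eq_neg_dualMap, LinearMap.neg_comp, LinearMap.comp_neg,
    LinearMap.dualMap_comp_dualMap]
  rw [← Module.End.mul_eq_comp, mul_assoc, ← mul_assoc _ _ (φ _), key]
  noncomm_ring

lemma starRep_comp_dualMap_symm {φ : A →ₗ[K] Module.End K V}
    (hφ : ∀ x, φ (α x) ∘ₗ β = β ∘ₗ φ x) (x : A) :
    starRep α β φ x ∘ₗ β.symm.toLinearMap.dualMap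
      = -((β.symm : Module.End K V) ^ 4 * (φ (α (α x)) * β)).dualMap := by
  simp only [starRep_eq_neg_dualMap, LinearMap.neg_comp, LinearMap.dualMap_comp_dualMap]
  congr 2
  rw [← Module.End.mul_eq_comp, show φ (α (α x)) * β = β * φ (α x) from hφ (α x), pow_succ _ 3,
    mul_assoc, ← mul_assoc _ (β : Module.End K V), LinearEquiv.coe_symm_mul_coe, one_mul]
  noncomm_ring

lemma starRep_comp_dualMap_symm_eq_dualMap_symm_comp {φ : A →ₗ[K] Module.End K V}
    (hφ : ∀ x, φ (α x) ∘ₗ β = β ∘ₗ φ x) (x : A) :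
    starRep α β φ (α x) ∘ₗ β.symm.toLinearMap.dualMap
      = β.symm.toLinearMap.dualMap ∘ₗ starRep α β φ x := by
  rw [starRep_comp_dualMap_symm hφ, starRep_eq_neg_dualMap, LinearMap.comp_neg,
    LinearMap.dualMap_comp_dualMap, ← Module.End.mul_eq_comp, mul_assoc,
    mul_symm_eq_symm_mul hφ, show φ (α (α (α x))) * β = β * φ (α (α x)) from hφ _,
    pow_succ _ 3, mul_assoc, ← mul_assoc _ (β : Module.End K V), LinearEquiv.coe_symm_mul_coe,
    one_mul]
  noncomm_ring

end StarRep

section HomLie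

variable {K L V : Type*} [Field K] [AddCommGroup L] [Module K L] [AddCommGroup V] [Module K V]

theorem IsHomLieRep.starRep {bracket : L →ₗ[K] L →ₗ[K] L} {α : L →ₗ[K] L} {β : V ≃ₗ[K] V}
    {σ : L →ₗ[K] Module.End K V} (hσ : IsHomLieRep bracket α β σ)
    (hα : ∀ x y, α (bracket x y) = bracket (α x) (α y)) :
    IsHomLieRep bracket α β.symm.toLinearMap.dualMap (starRep α β σ) := by
  refine ⟨starRep_comp_dualMap_symm_eq_dualMap_symm_comp hσ.1, fun x y => ?_⟩
  have key : σ (α (α (bracket x y))) * β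
      = σ (α (α (α x))) * σ (α (α y)) - σ (α (α (α y))) * σ (α (α x)) := by
    rw [hα, hα]
    exact hσ.2 _ _
  rw [starRep_comp_dualMap_symm hσ.1, starRep_comp_starRep _ hσ.1, starRep_comp_starRep _ hσ.1,
    key, mul_sub]
  simp only [LinearMap.dualMap_def, map_sub, neg_sub]

end HomLie

section HomPreLie

variable {K A V : Type*} [Field K] [AddCommGroup A] [Module K A] [AddCommGroup V] [Module K V]
  {mul : A →ₗ[K] A →ₗ[K] A} {α : A →ₗ[K] A}

lemma map_commutator_of_map_mul (hα : ∀ x y, α (mul x y) = mul (α x) (α y)) (x y : A) :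
    α ((mul - mul.flip) x y) = (mul - mul.flip) (α x) (α y) := by
  simp only [LinearMap.sub_apply, LinearMap.flip_apply, map_sub, hα]

theorem IsHomPreLieRep.isHomLieRep_sub {β : V →ₗ[K] V} {ρ μ : A →ₗ[K] Module.End K V}
    (h : IsHomPreLieRep mul α β ρ μ) : IsHomLieRep (mul - mul.flip) α β (ρ - μ) := by
  obtain ⟨⟨hρβ, hρ⟩, hμβ, hμ⟩ := h
  refine ⟨fun x => ?_, fun x y => ?_⟩
  · simp only [LinearMap.sub_apply, LinearMap.sub_comp, LinearMap.comp_sub, hρβ, hμβ]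
  · have hρxy := hρ x y
    simp only [LinearMap.sub_apply, LinearMap.flip_apply, map_sub, LinearMap.sub_comp,
      LinearMap.comp_sub] at hρxy ⊢
    linear_combination (norm := abel) hρxy + hμ x y - hμ y x

lemma IsHomPreLieRep.neg_map_comp_eq_comp_neg {β : V →ₗ[K] V} {ρ μ : A →ₗ[K] Module.End K V}
    (h : IsHomPreLieRep mul α β ρ μ) (x : A) : (-μ) (α x) ∘ₗ β = β ∘ₗ (-μ) x := by
  simp only [LinearMap.neg_apply, LinearMap.neg_comp, LinearMap.comp_neg, h.2.1]

theorem IsHomPreLieRep.starRep_neg_comp_sub {β : V ≃ₗ[K] V} {ρ μ : A →ₗ[K] Module.End K V}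
    (h : IsHomPreLieRep mul α β ρ μ) (hα : ∀ x y, α (mul x y) = mul (α x) (α y)) (x y : A) :
    starRep α β (-μ) (α y) ∘ₗ starRep α β (-μ) x
        - starRep α β (-μ) (mul x y) ∘ₗ β.symm.toLinearMap.dualMap
      = starRep α β (-μ) (α y) ∘ₗ starRep α β (ρ - μ) x
        - starRep α β (ρ - μ) (α x) ∘ₗ starRep α β (-μ) y := by
  have key : ∀ a b, (ρ - μ) (α a) * (-μ) b
      = (-μ) (α a) * (-μ) b + (-μ) (mul a b) * β + (-μ) (α b) * (ρ - μ) a := by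
    intro a b
    have hμ := h.2.2 a b
    simp only [← Module.End.mul_eq_comp] at hμ
    simp only [LinearMap.sub_apply, LinearMap.neg_apply, sub_mul, mul_sub, mul_neg, neg_mul,
      neg_neg]
    linear_combination (norm := abel) -hμ
  have hν := h.neg_map_comp_eq_comp_neg
  rw [starRep_comp_starRep _ hν, starRep_comp_dualMap_symm hν, starRep_comp_starRep _ hν,
    starRep_comp_starRep _ h.isHomLieRep_sub.1, hα, hα, key]
  simp only [mul_add, LinearMap.dualMap_def, map_add]
  abel

end HomPreLie

/-- Let `(V,β,ρ,μ)` be a representation of a Hom-pre-Lie algebra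
`(A,·,α)` with `β` invertible.  Then `(V*, (β⁻¹)*, ρ⋆ − μ⋆, −μ⋆)` is a representation
of `(A,·,α)` (the dual representation), where
`⟨ρ⋆(x)(ξ), u⟩ = −⟨ξ, β⁻²(ρ(α(x))(u))⟩`, `⟨μ⋆(x)(ξ), u⟩ = −⟨ξ, β⁻²(μ(α(x))(u))⟩`
and `(β⁻¹)*` is the transpose of `β⁻¹`. -/
theorem dual_rep_isHomPreLieRep
    {K A V : Type*} [Field K] [AddCommGroup A] [Module K A]
    [AddCommGroup V] [Module K V]
    (mul : A →ₗ[K] A →ₗ[K] A) (α : A ≃ₗ[K] A)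
    (hA : IsHomPreLie mul (α : A →ₗ[K] A))
    (β : V ≃ₗ[K] V) (ρ μ : A →ₗ[K] Module.End K V)
    (hrep : IsHomPreLieRep mul (α : A →ₗ[K] A) (β : V →ₗ[K] V) ρ μ) :
    IsHomPreLieRep mul (α : A →ₗ[K] A)
      (β.symm.toLinearMap.dualMap)
      (starRep (α : A →ₗ[K] A) β ρ - starRep (α : A →ₗ[K] A) β μ)
      (- starRep (α : A →ₗ[K] A) β μ) := by
  rw [← starRep_sub, ← starRep_neg]
  exact ⟨hrep.isHomLieRep_sub.starRep (map_commutator_of_map_mul hA.1),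
    fun x => (starRep_comp_dualMap_symm_eq_dualMap_symm_comp hrep.neg_map_comp_eq_comp_neg x).symm,
    hrep.starRep_neg_comp_sub hA.1⟩
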